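/- Let θ ≥ 0, C₀ > 0, and let t : ℤ[i]∖{0} → ℂ satisfy |t(n)| ≤ C₀·|n|^θ for all n and the Hecke relations t(m)·t(n) = (1/4)·∑_{d∈ℤ[i], d≠0, d|m, d|n} t(m·n/d²) for all nonzero m, n ∈ ℤ[i] (the sum running over all nonzero common Gaussian-integer divisors d of m and n). Define H(s) = (1/4)·∑_{n∈ℤ[i], n≠0} t(n)·|n|^{−2s}. Then for all s₁, s₂ ∈ ℂ with Re s₁ > 1 + θ/2 and Re s₂ > 1 + θ/2, all series involved converge absolutely and H(s₁)·H(s₂) = (1/4)·ζ_F(s₁+s₂)·∑_{n∈ℤ[i], n≠0} σ_{s₁−s₂}(n)·t(n)·|n|^{−2s₁}. -/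

import Mathlib

open scoped Classical

noncomputable section

/-- The image of a Gaussian integer in `ℂ`. -/
def gc (n : GaussianInt) : ℂ := GaussianInt.toComplex n

/-- The Dedekind zeta function of `ℚ(i)` as an absolutely convergent series,
`ζ_F(s) = (1/4) ∑_{n ≠ 0} |n|^{-2s}`. -/
def zetaF (s : ℂ) : ℂ :=
  (1 / 4) * ∑' n : GaussianInt, if n = 0 then 0 else (‖gc n‖ : ℂ) ^ (-2 * s)

/-- The divisor sum `σ_ν(n) = (1/4) ∑_{d ∣ n, d ≠ 0} |d|^{2ν}`. -/
def sigmaF (ν : ℂ) (n : GaussianInt) : ℂ :=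
  (1 / 4) * ∑' d : GaussianInt,
    if d ≠ 0 ∧ d ∣ n then (‖gc d‖ : ℂ) ^ (2 * ν) else 0

/-- The Hecke series `H(s) = (1/4) ∑_{n ≠ 0} t(n) |n|^{-2s}`. -/
def heckeSeries (t : GaussianInt → ℂ) (s : ℂ) : ℂ :=
  (1 / 4) * ∑' n : GaussianInt,
    if n = 0 then 0 else t n * (‖gc n‖ : ℂ) ^ (-2 * s)

lemma absgc_pos {n : GaussianInt} (h : n ≠ 0) : 0 < ‖gc n‖ := by
  apply norm_pos_iff.mpr
  simpa [gc, GaussianInt.toComplex_eq_zero] using h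

lemma absgc_mul (m n : GaussianInt) :
    ‖gc (m * n)‖ = ‖gc m‖ * ‖gc n‖ := by
  simp [gc, map_mul]

lemma norm_cp {n : GaussianInt} (h : n ≠ 0) (s : ℂ) :
    ‖((‖gc n‖ : ℝ) : ℂ) ^ s‖ = ‖gc n‖ ^ s.re := by
  rw [Complex.norm_cpow_eq_rpow_re_of_pos (absgc_pos h)]

lemma cp_ne_zero {n : GaussianInt} (h : n ≠ 0) (s : ℂ) :
    ((‖gc n‖ : ℝ) : ℂ) ^ s ≠ 0 := by
  simp [Complex.cpow_eq_zero_iff, Complex.ofReal_eq_zero, (absgc_pos h).ne']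

lemma summable_w {r : ℝ} (hr : 2 < r) :
    Summable fun n : GaussianInt => if n = 0 then (0 : ℝ) else ‖gc n‖ ^ (-r) := by
  have hinj : Function.Injective fun n : GaussianInt => (![n.re, n.im] : Fin 2 → ℤ) := by
    intro a b h
    have h0 := congrFun h 0
    have h1 := congrFun h 1
    simp only [Matrix.cons_val_zero, Matrix.cons_val_one, Matrix.head_cons] at h0 h1
    exact Zsqrtd.ext h0 h1
  have hs : Summable fun n : GaussianInt => ‖(![n.re, n.im] : Fin 2 → ℤ)‖ ^ (-r) :=
    (EisensteinSeries.summable_one_div_norm_rpow hr).comp_injective hinj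
  refine hs.of_nonneg_of_le (fun n => by positivity) (fun n => ?_)
  by_cases hn : n = 0
  · simp only [if_pos hn]; positivity
  · rw [if_neg hn]
    have hvne : (![n.re, n.im] : Fin 2 → ℤ) ≠ 0 := by
      intro hv
      rw [funext_iff] at hv
      have h0 := hv 0
      have h1 := hv 1
      simp only [Matrix.cons_val_zero, Matrix.cons_val_one, Matrix.head_cons, Pi.zero_apply] at h0 h1
      exact hn (Zsqrtd.ext h0 h1)
    have hpos : 0 < ‖(![n.re, n.im] : Fin 2 → ℤ)‖ := norm_pos_iff.mpr hvne
    have hle : ‖(![n.re, n.im] : Fin 2 → ℤ)‖ ≤ ‖gc n‖ := by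
      rw [pi_norm_le_iff_of_nonneg (norm_nonneg _)]
      intro i
      fin_cases i
      · simpa [gc, Int.norm_eq_abs] using Complex.abs_re_le_norm (gc n)
      · simpa [gc, Int.norm_eq_abs] using Complex.abs_im_le_norm (gc n)
    exact Real.rpow_le_rpow_of_nonpos hpos hle (by linarith)

lemma rpow_merge {n : GaussianInt} (h : n ≠ 0) (x y : ℝ) :
    ‖gc n‖ ^ x * ‖gc n‖ ^ y = ‖gc n‖ ^ (x + y) :=
  (Real.rpow_add (absgc_pos h) x y).symm

lemma re_neg_two_mul (s : ℂ) : (-2 * s).re = -(2 * s.re) := by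
  simp [Complex.mul_re]

lemma re_two_mul (s : ℂ) : (2 * s).re = 2 * s.re := by
  simp [Complex.mul_re]

lemma absgc_rpow_nonneg (n : GaussianInt) (x : ℝ) : 0 ≤ ‖gc n‖ ^ x :=
  Real.rpow_nonneg (norm_nonneg _) _

/-- weighted summability with the Hecke-bound. -/
lemma summable_tw {θ C₀ : ℝ} {t : GaussianInt → ℂ}
    (hbound : ∀ n : GaussianInt, n ≠ 0 → ‖t n‖ ≤ C₀ * ‖gc n‖ ^ θ)
    {ρ : ℝ} (hρ : θ + ρ < -2) :
    Summable fun n : GaussianInt =>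
      if n = 0 then (0 : ℝ) else ‖t n‖ * ‖gc n‖ ^ ρ := by
  have h := (summable_w (r := -(θ + ρ)) (by linarith)).mul_left C₀
  refine h.of_nonneg_of_le (fun n => ?_) fun n => ?_
  · by_cases hn : n = 0
    · simp [hn]
    · rw [if_neg hn]; positivity
  · by_cases hn : n = 0
    · simp [hn]
    · simp only [if_neg hn, neg_neg]
      calc ‖t n‖ * ‖gc n‖ ^ ρ
          ≤ (C₀ * ‖gc n‖ ^ θ) * ‖gc n‖ ^ ρ :=
            mul_le_mul_of_nonneg_right (hbound n hn) (absgc_rpow_nonneg n ρ)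
        _ = C₀ * ‖gc n‖ ^ (θ + ρ) := by
            rw [mul_assoc, rpow_merge hn]

abbrev GI := GaussianInt

def cp (s : ℂ) (n : GI) : ℂ := ((‖gc n‖ : ℝ) : ℂ) ^ s

lemma norm_cp' {n : GI} (h : n ≠ 0) (s : ℂ) : ‖cp s n‖ = ‖gc n‖ ^ s.re :=
  norm_cp h s

def hh (t : GI → ℂ) (s₁ s₂ : ℂ) (p : GI × GI) : ℂ :=
  if p.1 = 0 ∨ p.2 = 0 then 0 else t (p.1 * p.2) * cp (-2 * s₁) p.1 * cp (-2 * s₂) p.2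

def zz (s : ℂ) (d : GI) : ℂ := if d = 0 then 0 else cp (-2 * s) d

def GG (t : GI → ℂ) (s₁ s₂ : ℂ) (x : GI × GI × GI) : ℂ :=
  zz (s₁ + s₂) x.1 * hh t s₁ s₂ x.2

def FF (t : GI → ℂ) (s₁ s₂ : ℂ) (q : (GI × GI) × GI) : ℂ :=
  if q.1.1 = 0 ∨ q.1.2 = 0 then 0
  else if q.2 ≠ 0 ∧ q.2 ∣ q.1.1 ∧ q.2 ∣ q.1.2 then
    t (q.1.1 * q.1.2 / q.2 ^ 2) * (cp (-2 * s₁) q.1.1 * cp (-2 * s₂) q.1.2)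
  else 0

def KK (t : GI → ℂ) (s₁ s₂ : ℂ) (p : GI × GI) : ℂ :=
  if p.1 ≠ 0 ∧ p.2 ≠ 0 ∧ p.2 ∣ p.1 then
    t p.1 * cp (-2 * s₁) p.1 * cp (2 * (s₁ - s₂)) p.2
  else 0

lemma summable_ww {x y : ℝ} (h : 2 < -(x + y)) (C : ℝ) :
    Summable fun n : GI =>
      if n = 0 then (0 : ℝ) else C * (‖gc n‖ ^ x * ‖gc n‖ ^ y) := by
  refine ((summable_w h).mul_left C).congr fun n => ?_
  by_cases hn : n = 0
  · simp [hn]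
  · rw [if_neg hn, if_neg hn, rpow_merge hn, neg_neg]

lemma ite_w_nonneg {C : ℝ} (hC : 0 ≤ C) (x y : ℝ) (n : GI) :
    0 ≤ if n = 0 then (0 : ℝ) else C * (‖gc n‖ ^ x * ‖gc n‖ ^ y) := by
  by_cases hn : n = 0
  · simp [hn]
  · rw [if_neg hn]; positivity


section main
variable {θ C₀ : ℝ} {t : GI → ℂ} {s₁ s₂ : ℂ}
  (hθ : 0 ≤ θ) (hC₀ : 0 < C₀)
  (hbound : ∀ n : GI, n ≠ 0 → ‖t n‖ ≤ C₀ * ‖gc n‖ ^ θ)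
  (h₁ : 1 + θ / 2 < s₁.re) (h₂ : 1 + θ / 2 < s₂.re)

include hbound h₁ h₂ hθ hC₀

lemma summable_hh_norm : Summable fun p : GI × GI => ‖hh t s₁ s₂ p‖ := by
  have hw1 := summable_ww (x := θ) (y := -(2 * s₁.re)) (by linarith) C₀
  have hw2 := summable_ww (x := θ) (y := -(2 * s₂.re)) (by linarith) (1 : ℝ)
  have hs := hw1.mul_of_nonneg hw2 (ite_w_nonneg hC₀.le _ _) (ite_w_nonneg zero_le_one _ _)
  refine hs.of_nonneg_of_le (fun p => norm_nonneg _) fun p => ?_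
  obtain ⟨a, b⟩ := p
  by_cases ha : a = 0
  · have h0 : hh t s₁ s₂ (a, b) = 0 := by simp [hh, ha]
    rw [h0, norm_zero]
    exact mul_nonneg (ite_w_nonneg hC₀.le _ _ _) (ite_w_nonneg zero_le_one _ _ _)
  · by_cases hb : b = 0
    · have h0 : hh t s₁ s₂ (a, b) = 0 := by simp [hh, hb]
      rw [h0, norm_zero]
      exact mul_nonneg (ite_w_nonneg hC₀.le _ _ _) (ite_w_nonneg zero_le_one _ _ _)
    · simp only [hh, if_neg (by simp [ha, hb] : ¬(a = 0 ∨ b = 0))]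
      rw [if_neg ha, if_neg hb]
      rw [norm_mul, norm_mul, norm_cp' ha, norm_cp' hb, re_neg_two_mul, re_neg_two_mul]
      have hab : a * b ≠ 0 := mul_ne_zero ha hb
      have hsplit : ‖gc (a * b)‖ ^ θ
          = ‖gc a‖ ^ θ * ‖gc b‖ ^ θ := by
        rw [absgc_mul, Real.mul_rpow (norm_nonneg _) (norm_nonneg _)]
      calc ‖t (a * b)‖ * ‖gc a‖ ^ (-(2 * s₁.re)) * ‖gc b‖ ^ (-(2 * s₂.re))
          ≤ C₀ * ‖gc (a * b)‖ ^ θ * ‖gc a‖ ^ (-(2 * s₁.re)) *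
              ‖gc b‖ ^ (-(2 * s₂.re)) := by
            gcongr
            exact hbound (a * b) hab
        _ = C₀ * (‖gc a‖ ^ θ * ‖gc a‖ ^ (-(2 * s₁.re))) *
              (1 * (‖gc b‖ ^ θ * ‖gc b‖ ^ (-(2 * s₂.re)))) := by
            rw [hsplit]; ring

omit hθ hC₀ hbound h₁ h₂

lemma cp_mul (s : ℂ) (m n : GI) : cp s (m * n) = cp s m * cp s n := by
  rw [cp, absgc_mul, Complex.ofReal_mul,
    Complex.mul_cpow_ofReal_nonneg (norm_nonneg _) (norm_nonneg _), cp, cp]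

lemma cp_merge {d : GI} (hd : d ≠ 0) (x y : ℂ) : cp x d * cp y d = cp (x + y) d :=
  (Complex.cpow_add _ _ (by simpa [Complex.ofReal_eq_zero] using (absgc_pos hd).ne')).symm

lemma FF_comp (d a b : GI) (hd : d ≠ 0) :
    FF t s₁ s₂ ((d * a, d * b), d) = GG t s₁ s₂ (d, a, b) := by
  by_cases ha : a = 0
  · simp [FF, GG, hh, ha]
  by_cases hb : b = 0
  · simp [FF, GG, hh, hb]
  have hda : d * a ≠ 0 := mul_ne_zero hd ha
  have hdb : d * b ≠ 0 := mul_ne_zero hd hb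
  rw [FF, if_neg (by simp [hda, hdb]),
    if_pos ⟨hd, dvd_mul_right d a, dvd_mul_right d b⟩]
  have hdiv : d * a * (d * b) / d ^ 2 = a * b := by
    have h : d * a * (d * b) = d ^ 2 * (a * b) := by ring
    rw [h, mul_div_cancel_left₀ _ (pow_ne_zero 2 hd)]
  rw [hdiv, GG, hh, if_neg (by simp [ha, hb]), zz, if_neg hd, cp_mul, cp_mul]
  have hexp : cp (-2 * s₁) d * cp (-2 * s₂) d = cp (-2 * (s₁ + s₂)) d := by
    rw [cp_merge hd]; ring_nf
  rw [← hexp]; ring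

lemma re_sum : (-2 * (s₁ + s₂)).re = -(2 * (s₁.re + s₂.re)) := by
  simp [Complex.mul_re, Complex.add_re]

lemma summable_zz_norm (hσ : 2 < 2 * (s₁.re + s₂.re)) :
    Summable fun d : GI => ‖zz (s₁ + s₂) d‖ := by
  refine (summable_w (r := 2 * (s₁.re + s₂.re)) hσ).congr fun d => ?_
  by_cases hd : d = 0
  · simp [zz, hd]
  · rw [if_neg hd, zz, if_neg hd, norm_cp' hd, re_sum]

include hθ hC₀ hbound h₁ h₂

lemma summable_GG_norm : Summable fun x : GI × GI × GI => ‖GG t s₁ s₂ x‖ := by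
  have hz := summable_zz_norm (s₁ := s₁) (s₂ := s₂) (by linarith)
  have hh' := summable_hh_norm hθ hC₀ hbound h₁ h₂
  refine (hz.mul_of_nonneg hh' (fun d => norm_nonneg _) (fun p => norm_nonneg _)).congr
    fun x => ?_
  rw [GG, norm_mul]

lemma summable_FF_norm : Summable fun q : (GI × GI) × GI => ‖FF t s₁ s₂ q‖ := by
  set i : {x : GI × GI × GI // x.1 ≠ 0} → (GI × GI) × GI :=
    fun x => ((x.1.1 * x.1.2.1, x.1.1 * x.1.2.2), x.1.1) with hi_def
  have hinj : Function.Injective i := by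
    rintro ⟨⟨d, a, b⟩, hd⟩ ⟨⟨d', a', b'⟩, hd'⟩ h
    simp only [hi_def, Prod.mk.injEq] at h
    obtain ⟨⟨h1, h2⟩, h3⟩ := h
    subst h3
    exact Subtype.ext (by simp [mul_left_cancel₀ hd h1, mul_left_cancel₀ hd h2])
  have hvan : ∀ q ∉ Set.range i, ‖FF t s₁ s₂ q‖ = 0 := by
    rintro ⟨⟨m, n⟩, dd⟩ hq
    rw [norm_eq_zero]
    by_contra hF
    apply hq
    rw [FF] at hF
    split_ifs at hF with hc1 hc2
    · exact absurd rfl hF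
    · obtain ⟨hdd, hdm, hdn⟩ := hc2
      refine ⟨⟨(dd, m / dd, n / dd), hdd⟩, ?_⟩
      simp only [hi_def, Prod.mk.injEq]
      exact ⟨⟨EuclideanDomain.mul_div_cancel' hdd hdm, EuclideanDomain.mul_div_cancel' hdd hdn⟩, trivial⟩
    · exact absurd rfl hF
  refine (Function.Injective.summable_iff hinj hvan).mp ?_
  have hsub := (summable_GG_norm hθ hC₀ hbound h₁ h₂).subtype {x : GI × GI × GI | x.1 ≠ 0}
  refine hsub.congr fun x => ?_
  obtain ⟨⟨d, a, b⟩, hd⟩ := x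
  simp only [Function.comp_apply, hi_def]
  rw [FF_comp d a b hd]

omit hθ hC₀ hbound h₁ h₂ in
lemma summable_www {x y z : ℝ} (h : 2 < -(x + y + z)) (C : ℝ) :
    Summable fun n : GI =>
      if n = 0 then (0 : ℝ)
      else C * (‖gc n‖ ^ x * ‖gc n‖ ^ y * ‖gc n‖ ^ z) := by
  refine ((summable_w h).mul_left C).congr fun n => ?_
  by_cases hn : n = 0
  · simp [hn]
  · rw [if_neg hn, if_neg hn, rpow_merge hn, rpow_merge hn, neg_neg]

omit hθ hC₀ hbound h₁ h₂ in
lemma ite_www_nonneg {C : ℝ} (hC : 0 ≤ C) (x y z : ℝ) (n : GI) :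
    0 ≤ if n = 0 then (0 : ℝ)
      else C * (‖gc n‖ ^ x * ‖gc n‖ ^ y * ‖gc n‖ ^ z) := by
  by_cases hn : n = 0
  · simp [hn]
  · rw [if_neg hn]; positivity

omit hθ hC₀ hbound h₁ h₂ in
lemma re_two_sub : (2 * (s₁ - s₂)).re = 2 * s₁.re - 2 * s₂.re := by
  simp [Complex.mul_re, Complex.sub_re]; ring

lemma summable_KK_norm : Summable fun p : GI × GI => ‖KK t s₁ s₂ p‖ := by
  set i : {p : GI × GI // p.1 ≠ 0} → GI × GI := fun x => (x.1.1 * x.1.2, x.1.1) with hi_def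
  have hinj : Function.Injective i := by
    rintro ⟨⟨b, e⟩, hb⟩ ⟨⟨b', e'⟩, hb'⟩ h
    simp only [hi_def, Prod.mk.injEq] at h
    obtain ⟨h1, h2⟩ := h
    subst h2
    exact Subtype.ext (by simp [mul_left_cancel₀ hb h1])
  have hvan : ∀ p ∉ Set.range i, ‖KK t s₁ s₂ p‖ = 0 := by
    rintro ⟨k, b⟩ hp
    rw [norm_eq_zero]
    by_contra hK
    apply hp
    rw [KK] at hK
    split_ifs at hK with hc
    · obtain ⟨hk, hb, hdvd⟩ := hc
      exact ⟨⟨(b, k / b), hb⟩, by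
        simp only [hi_def, Prod.mk.injEq]
        exact ⟨EuclideanDomain.mul_div_cancel' hb hdvd, trivial⟩⟩
    · exact absurd rfl hK
  refine (Function.Injective.summable_iff hinj hvan).mp ?_
  have hw1 := summable_www (x := θ) (y := -(2 * s₁.re)) (z := 2 * s₁.re - 2 * s₂.re)
    (by linarith) C₀
  have hw2 := summable_ww (x := θ) (y := -(2 * s₁.re)) (by linarith) (1 : ℝ)
  have hs := (hw1.mul_of_nonneg hw2 (ite_www_nonneg hC₀.le _ _ _) (ite_w_nonneg zero_le_one _ _))
  have hsub := hs.subtype {p : GI × GI | p.1 ≠ 0}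
  refine hsub.of_nonneg_of_le (fun x => norm_nonneg _) fun x => ?_
  obtain ⟨⟨b, e⟩, hb⟩ := x
  simp only [Function.comp_apply, hi_def]
  by_cases he : e = 0
  · have h0 : KK t s₁ s₂ (b * e, b) = 0 := by
      rw [KK, if_neg]
      simp [he]
    rw [h0, norm_zero, if_neg hb, he, if_pos rfl, mul_zero]
  · have hbe : b * e ≠ 0 := mul_ne_zero hb he
    rw [KK, if_pos ⟨hbe, hb, dvd_mul_right b e⟩, norm_mul, norm_mul,
      norm_cp' hbe, norm_cp' hb, re_neg_two_mul, re_two_sub, if_neg hb, if_neg he]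
    calc ‖t (b * e)‖ * ‖gc (b * e)‖ ^ (-(2 * s₁.re)) *
          ‖gc b‖ ^ (2 * s₁.re - 2 * s₂.re)
        ≤ C₀ * ‖gc (b * e)‖ ^ θ * ‖gc (b * e)‖ ^ (-(2 * s₁.re)) *
            ‖gc b‖ ^ (2 * s₁.re - 2 * s₂.re) := by
          gcongr
          exact hbound (b * e) hbe
      _ = C₀ * (‖gc b‖ ^ θ * ‖gc b‖ ^ (-(2 * s₁.re)) *
            ‖gc b‖ ^ (2 * s₁.re - 2 * s₂.re)) *
            (1 * (‖gc e‖ ^ θ * ‖gc e‖ ^ (-(2 * s₁.re)))) := by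
          rw [absgc_mul, Real.mul_rpow (norm_nonneg _) (norm_nonneg _),
            Real.mul_rpow (norm_nonneg _) (norm_nonneg _)]
          ring

lemma summable_KK : Summable (KK t s₁ s₂) :=
  (summable_KK_norm hθ hC₀ hbound h₁ h₂).of_norm

omit hθ hC₀ hbound h₁ h₂

lemma f_eq_tsum_FF
    (hhecke : ∀ m n : GaussianInt, m ≠ 0 → n ≠ 0 →
      t m * t n = (1 / 4) * ∑' d : GaussianInt,
        if d ≠ 0 ∧ d ∣ m ∧ d ∣ n then t (m * n / d ^ 2) else 0)
    (p : GI × GI) :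
    (if p.1 = 0 then 0 else t p.1 * cp (-2 * s₁) p.1) *
      (if p.2 = 0 then 0 else t p.2 * cp (-2 * s₂) p.2) =
    (1 / 4) * ∑' d : GI, FF t s₁ s₂ (p, d) := by
  obtain ⟨m, n⟩ := p
  by_cases hm : m = 0
  · simp [hm, FF]
  by_cases hn : n = 0
  · simp [hn, FF]
  rw [if_neg hm, if_neg hn]
  have key : (t m * cp (-2 * s₁) m) * (t n * cp (-2 * s₂) n)
      = (t m * t n) * (cp (-2 * s₁) m * cp (-2 * s₂) n) := by ring
  rw [key, hhecke m n hm hn, mul_assoc, ← tsum_mul_right]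
  congr 1
  refine tsum_congr fun d => ?_
  simp only [FF]
  rw [if_neg (by simp [hm, hn] : ¬(m = 0 ∨ n = 0))]
  split_ifs with hc
  · rfl
  · rw [zero_mul]

lemma GG_support {x : GI × GI × GI} (h : GG t s₁ s₂ x ≠ 0) :
    x.1 ≠ 0 ∧ x.2.1 ≠ 0 ∧ x.2.2 ≠ 0 := by
  refine ⟨fun h0 => h ?_, fun h0 => h ?_, fun h0 => h ?_⟩
  · simp [GG, zz, h0]
  · simp [GG, hh, h0]
  · simp [GG, hh, h0]

lemma tsum_FF_eq_GG : ∑' q : (GI × GI) × GI, FF t s₁ s₂ q = ∑' x : GI × GI × GI, GG t s₁ s₂ x := by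
  refine tsum_eq_tsum_of_ne_zero_bij
    (fun x => ((x.1.1 * x.1.2.1, x.1.1 * x.1.2.2), x.1.1)) ?_ ?_ ?_
  · rintro ⟨⟨d, a, b⟩, hx⟩ ⟨⟨d', a', b'⟩, hx'⟩ h
    have hd := (GG_support hx).1
    simp only [Prod.mk.injEq] at h
    obtain ⟨⟨h1, h2⟩, h3⟩ := h
    subst h3
    exact Subtype.ext (by simp [mul_left_cancel₀ hd h1, mul_left_cancel₀ hd h2])
  · rintro ⟨⟨m, n⟩, dd⟩ hq
    simp only [Function.mem_support, FF] at hq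
    split_ifs at hq with hc1 hc2
    · exact absurd rfl hq
    · obtain ⟨hdd, hdm, hdn⟩ := hc2
      push_neg at hc1
      obtain ⟨hm, hn⟩ := hc1
      set a := m / dd with ha_def
      set b := n / dd with hb_def
      have ham : dd * a = m := EuclideanDomain.mul_div_cancel' hdd hdm
      have hbn : dd * b = n := EuclideanDomain.mul_div_cancel' hdd hdn
      have ha : a ≠ 0 := fun h0 => hm (by rw [← ham, h0, mul_zero])
      have hb : b ≠ 0 := fun h0 => hn (by rw [← hbn, h0, mul_zero])
      have hab : m * n / dd ^ 2 = a * b := by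
        have h : m * n = dd ^ 2 * (a * b) := by rw [← ham, ← hbn]; ring
        rw [h, mul_div_cancel_left₀ _ (pow_ne_zero 2 hdd)]
      have htab : t (a * b) ≠ 0 := by
        intro h0
        rw [hab, h0, zero_mul] at hq
        exact hq rfl
      have hGG : GG t s₁ s₂ (dd, a, b) ≠ 0 := by
        rw [GG, zz, if_neg hdd, hh, if_neg (by simp [ha, hb])]
        exact mul_ne_zero (cp_ne_zero hdd _)
          (mul_ne_zero (mul_ne_zero htab (cp_ne_zero ha _)) (cp_ne_zero hb _))
      refine ⟨⟨(dd, a, b), hGG⟩, ?_⟩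
      simp only [Prod.mk.injEq]
      exact ⟨⟨ham, hbn⟩, trivial⟩
    · exact absurd rfl hq
  · rintro ⟨⟨d, a, b⟩, hx⟩
    exact FF_comp d a b (GG_support hx).1

lemma KK_support {p : GI × GI} (h : KK t s₁ s₂ p ≠ 0) :
    p.1 ≠ 0 ∧ p.2 ≠ 0 ∧ p.2 ∣ p.1 := by
  by_contra hc
  rw [KK, if_neg hc] at h
  exact h rfl

lemma tsum_hh_eq_KK : ∑' p : GI × GI, hh t s₁ s₂ p = ∑' p : GI × GI, KK t s₁ s₂ p := by
  refine tsum_eq_tsum_of_ne_zero_bij (fun x => (x.1.1 / x.1.2, x.1.2)) ?_ ?_ ?_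
  · rintro ⟨⟨k, b⟩, hx⟩ ⟨⟨k', b'⟩, hx'⟩ h
    obtain ⟨hk, hb, hdvd⟩ := KK_support hx
    obtain ⟨hk', hb', hdvd'⟩ := KK_support hx'
    simp only [Prod.mk.injEq] at h
    obtain ⟨h1, h2⟩ := h
    subst h2
    have hbb : b ≠ 0 := hb
    have hdb : b ∣ k := hdvd
    have hdb' : b ∣ k' := hdvd'
    refine Subtype.ext ?_
    have hkk : k = k' := by
      rw [← EuclideanDomain.mul_div_cancel' hbb hdb, h1,
        EuclideanDomain.mul_div_cancel' hbb hdb']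
    simp [hkk]
  · rintro ⟨a, b⟩ hp
    simp only [Function.mem_support, hh] at hp
    split_ifs at hp with hc
    · exact absurd rfl hp
    push_neg at hc
    obtain ⟨ha, hb⟩ := hc
    have htab : t (a * b) ≠ 0 := fun h0 => hp (by rw [h0, zero_mul, zero_mul])
    have hab : a * b ≠ 0 := mul_ne_zero ha hb
    have hKK : KK t s₁ s₂ (a * b, b) ≠ 0 := by
      rw [KK, if_pos ⟨hab, hb, dvd_mul_left b a⟩]
      exact mul_ne_zero (mul_ne_zero htab (cp_ne_zero hab _)) (cp_ne_zero hb _)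
    refine ⟨⟨(a * b, b), hKK⟩, ?_⟩
    simp only [Prod.mk.injEq]
    exact ⟨mul_div_cancel_right₀ a hb, trivial⟩
  · rintro ⟨⟨k, b⟩, hx⟩
    obtain ⟨hk, hb, hdvd⟩ := KK_support hx
    set a := k / b with ha_def
    have hak : b * a = k := EuclideanDomain.mul_div_cancel' hb hdvd
    have ha : a ≠ 0 := fun h0 => hk (by rw [← hak, h0, mul_zero])
    show hh t s₁ s₂ (a, b) = KK t s₁ s₂ (k, b)
    rw [hh, if_neg (by simp [ha, hb]), KK, if_pos ⟨hk, hb, hdvd⟩]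
    have hk_ab : k = a * b := by rw [← hak]; ring
    rw [hk_ab, cp_mul]
    have hexp : cp (-2 * s₁) b * cp (2 * (s₁ - s₂)) b = cp (-2 * s₂) b := by
      rw [cp_merge hb]; ring_nf
    rw [← hexp]; ring

lemma tsum_KK_fiber (k : GI) :
    ∑' b : GI, KK t s₁ s₂ (k, b) =
      if k = 0 then 0 else 4 * (sigmaF (s₁ - s₂) k * t k * cp (-2 * s₁) k) := by
  by_cases hk : k = 0
  · rw [if_pos hk]
    have : ∀ b : GI, KK t s₁ s₂ (k, b) = 0 := fun b => by
      rw [KK, if_neg (by simp [hk])]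
    simp [this]
  · rw [if_neg hk]
    have key : ∀ b : GI, KK t s₁ s₂ (k, b) =
        (if b ≠ 0 ∧ b ∣ k then ((‖gc b‖ : ℝ) : ℂ) ^ (2 * (s₁ - s₂)) else 0) *
          (t k * cp (-2 * s₁) k) := by
      intro b
      rw [KK]
      by_cases hc : b ≠ 0 ∧ b ∣ k
      · rw [if_pos ⟨hk, hc.1, hc.2⟩, if_pos hc]
        show _ = cp (2 * (s₁ - s₂)) b * (t k * cp (-2 * s₁) k)
        ring
      · rw [if_neg (by tauto), if_neg hc, zero_mul]
    rw [tsum_congr key, tsum_mul_right, sigmaF]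
    ring

include hθ hC₀ hbound h₁ h₂ in
lemma summable_claim3 : Summable fun n : GI =>
    ‖if n = 0 then 0 else
      sigmaF (s₁ - s₂) n * t n * (‖gc n‖ : ℂ) ^ (-2 * s₁)‖ := by
  have hKn := summable_KK_norm hθ hC₀ hbound h₁ h₂
  have hfib : ∀ k : GI, Summable fun b : GI => ‖KK t s₁ s₂ (k, b)‖ := fun k =>
    hKn.prod_factor k
  have hSK : Summable fun k : GI => ∑' b : GI, ‖KK t s₁ s₂ (k, b)‖ :=
    ⟨_, hKn.hasSum.prod_fiberwise fun k => (hfib k).hasSum⟩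
  refine (hSK.mul_left (1 / 4 : ℝ)).of_nonneg_of_le (fun n => norm_nonneg _) fun n => ?_
  by_cases hn : n = 0
  · rw [if_pos hn, norm_zero]
    have : 0 ≤ ∑' b : GI, ‖KK t s₁ s₂ (n, b)‖ := tsum_nonneg fun b => norm_nonneg _
    linarith
  · rw [if_neg hn]
    have hrel : sigmaF (s₁ - s₂) n * t n * cp (-2 * s₁) n
        = (1 / 4 : ℂ) * ∑' b : GI, KK t s₁ s₂ (n, b) := by
      rw [tsum_KK_fiber, if_neg hn]; ring
    show ‖sigmaF (s₁ - s₂) n * t n * cp (-2 * s₁) n‖ ≤ _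
    rw [hrel, norm_mul]
    have h14 : ‖(1 / 4 : ℂ)‖ = (1 / 4 : ℝ) := by norm_num
    rw [h14]
    exact mul_le_mul_of_nonneg_left (norm_tsum_le_tsum_norm (hfib n)) (by norm_num)

end main

theorem stmt19 (θ : ℝ) (hθ : 0 ≤ θ) (C₀ : ℝ) (hC₀ : 0 < C₀) (t : GaussianInt → ℂ)
    (hbound : ∀ n : GaussianInt, n ≠ 0 → ‖t n‖ ≤ C₀ * ‖gc n‖ ^ θ)
    (hhecke : ∀ m n : GaussianInt, m ≠ 0 → n ≠ 0 →
      t m * t n = (1 / 4) * ∑' d : GaussianInt,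
        if d ≠ 0 ∧ d ∣ m ∧ d ∣ n then t (m * n / d ^ 2) else 0)
    (s₁ s₂ : ℂ) (h₁ : 1 + θ / 2 < s₁.re) (h₂ : 1 + θ / 2 < s₂.re) :
    Summable (fun n : GaussianInt =>
      ‖if n = 0 then 0 else t n * (‖gc n‖ : ℂ) ^ (-2 * s₁)‖) ∧
    Summable (fun n : GaussianInt =>
      ‖if n = 0 then 0 else t n * (‖gc n‖ : ℂ) ^ (-2 * s₂)‖) ∧
    Summable (fun n : GaussianInt =>
      ‖if n = 0 then 0 else
        sigmaF (s₁ - s₂) n * t n * (‖gc n‖ : ℂ) ^ (-2 * s₁)‖) ∧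
    heckeSeries t s₁ * heckeSeries t s₂ =
      (1 / 4) * zetaF (s₁ + s₂) *
        ∑' n : GaussianInt,
          if n = 0 then 0 else
            sigmaF (s₁ - s₂) n * t n * (‖gc n‖ : ℂ) ^ (-2 * s₁) := by
  have S1 : Summable (fun n : GaussianInt =>
      ‖if n = 0 then 0 else t n * (‖gc n‖ : ℂ) ^ (-2 * s₁)‖) := by
    refine (summable_tw hbound (ρ := -(2 * s₁.re)) (by linarith)).congr fun n => ?_
    by_cases hn : n = 0
    · simp [hn]
    · rw [if_neg hn, if_neg hn, norm_mul, norm_cp hn, re_neg_two_mul]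
  have S2 : Summable (fun n : GaussianInt =>
      ‖if n = 0 then 0 else t n * (‖gc n‖ : ℂ) ^ (-2 * s₂)‖) := by
    refine (summable_tw hbound (ρ := -(2 * s₂.re)) (by linarith)).congr fun n => ?_
    by_cases hn : n = 0
    · simp [hn]
    · rw [if_neg hn, if_neg hn, norm_mul, norm_cp hn, re_neg_two_mul]
  have S3 := summable_claim3 hθ hC₀ hbound h₁ h₂
  refine ⟨S1, S2, S3, ?_⟩
  have hFF : Summable (FF t s₁ s₂) := (summable_FF_norm hθ hC₀ hbound h₁ h₂).of_norm
  have hKKs := summable_KK hθ hC₀ hbound h₁ h₂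
  have hzz : Summable fun d : GI => ‖zz (s₁ + s₂) d‖ :=
    summable_zz_norm (s₁ := s₁) (s₂ := s₂) (by linarith)
  have hhhn := summable_hh_norm hθ hC₀ hbound h₁ h₂
  have hz4 : (4 : ℂ) * zetaF (s₁ + s₂) = ∑' d : GI, zz (s₁ + s₂) d := by
    rw [zetaF]
    have hc : (∑' n : GaussianInt,
        if n = 0 then 0 else (‖gc n‖ : ℂ) ^ (-2 * (s₁ + s₂)))
        = ∑' d : GI, zz (s₁ + s₂) d := rfl
    rw [hc]; ring
  calc heckeSeries t s₁ * heckeSeries t s₂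
      = (1 / 16 : ℂ) *
        ((∑' n : GaussianInt,
            if n = 0 then 0 else t n * (‖gc n‖ : ℂ) ^ (-2 * s₁)) *
          (∑' n : GaussianInt,
            if n = 0 then 0 else t n * (‖gc n‖ : ℂ) ^ (-2 * s₂))) := by
        rw [heckeSeries, heckeSeries]; ring
    _ = (1 / 16 : ℂ) * ∑' p : GI × GI,
          (if p.1 = 0 then 0 else t p.1 * (‖gc p.1‖ : ℂ) ^ (-2 * s₁)) *
          (if p.2 = 0 then 0 else t p.2 * (‖gc p.2‖ : ℂ) ^ (-2 * s₂)) := by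
        rw [tsum_mul_tsum_of_summable_norm S1 S2]
    _ = (1 / 16 : ℂ) * ∑' p : GI × GI, ((1 / 4 : ℂ) * ∑' d : GI, FF t s₁ s₂ (p, d)) :=
        congrArg (fun z => (1 / 16 : ℂ) * z)
          (tsum_congr fun p => f_eq_tsum_FF hhecke p)
    _ = (1 / 16 : ℂ) * ((1 / 4 : ℂ) * ∑' p : GI × GI, ∑' d : GI, FF t s₁ s₂ (p, d)) := by
        rw [tsum_mul_left]
    _ = (1 / 16 : ℂ) * ((1 / 4 : ℂ) * ∑' q : (GI × GI) × GI, FF t s₁ s₂ q) := by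
        rw [← Summable.tsum_prod' hFF fun p => hFF.prod_factor p]
    _ = (1 / 64 : ℂ) * ∑' x : GI × GI × GI, GG t s₁ s₂ x := by
        rw [tsum_FF_eq_GG]; ring
    _ = (1 / 64 : ℂ) * ((∑' d : GI, zz (s₁ + s₂) d) * ∑' p : GI × GI, hh t s₁ s₂ p) := by
        rw [tsum_mul_tsum_of_summable_norm hzz hhhn]
        rfl
    _ = (1 / 64 : ℂ) * ((∑' d : GI, zz (s₁ + s₂) d) * ∑' p : GI × GI, KK t s₁ s₂ p) := by
        rw [tsum_hh_eq_KK]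
    _ = (1 / 64 : ℂ) * ((∑' d : GI, zz (s₁ + s₂) d) *
          ∑' k : GI, ∑' b : GI, KK t s₁ s₂ (k, b)) := by
        rw [← Summable.tsum_prod' hKKs fun k => hKKs.prod_factor k]
    _ = (1 / 64 : ℂ) * ((∑' d : GI, zz (s₁ + s₂) d) *
          ∑' k : GI, (4 : ℂ) * (if k = 0 then 0 else
            sigmaF (s₁ - s₂) k * t k * cp (-2 * s₁) k)) := by
        refine congrArg _ (congrArg _ (tsum_congr fun k => ?_))
        rw [tsum_KK_fiber]
        split_ifs with hk
        · rw [mul_zero]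
        · ring
    _ = (1 / 64 : ℂ) * ((4 * zetaF (s₁ + s₂)) *
          ((4 : ℂ) * ∑' k : GI, (if k = 0 then 0 else
            sigmaF (s₁ - s₂) k * t k * cp (-2 * s₁) k))) := by
        rw [tsum_mul_left, hz4]
    _ = (1 / 4) * zetaF (s₁ + s₂) *
        ∑' n : GaussianInt,
          if n = 0 then 0 else
            sigmaF (s₁ - s₂) n * t n * (‖gc n‖ : ℂ) ^ (-2 * s₁) := by
        have hc : (∑' k : GI, (if k = 0 then 0 else
            sigmaF (s₁ - s₂) k * t k * cp (-2 * s₁) k))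
            = ∑' n : GaussianInt,
              if n = 0 then 0 else
                sigmaF (s₁ - s₂) n * t n * (‖gc n‖ : ℂ) ^ (-2 * s₁) := rfl
        rw [hc]; ring
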